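/- Let p be an odd prime and let ζ ∈ ℤ_p be a primitive (p−1)-st root of unity. In V := ℚ_p[X]/(X^p) with x the class of X, set s_i := 1 − Σ_{m=0}^{p−1} C(ζ^i, m)(−x)^m (the truncation mod X^p of 1 − (1−x)^{ζ^i}). Then for every integer n ≥ 1, in the element Σ_{i=0}^{p−2} (s_i)^n ∈ V the coefficients of x^a vanish for all 0 ≤ a ≤ p−2; that is, Σ_{i=0}^{p−2} (s_i)^n is a ℚ_p-scalar multiple of x^{p−1}. -/

import Mathlib

open Polynomial

noncomputable def pbinom (p : ℕ) [Fact p.Prime] (y : ℚ_[p]) (n : ℕ) : ℚ_[p] :=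
  (descPochhammer ℚ_[p] n).eval y / (n.factorial : ℚ_[p])

noncomputable abbrev TruncV (p : ℕ) [Fact p.Prime] : Type :=
  Polynomial ℚ_[p] ⧸ Ideal.span {(Polynomial.X : Polynomial ℚ_[p]) ^ p}

noncomputable def xV (p : ℕ) [Fact p.Prime] : TruncV p :=
  Ideal.Quotient.mk _ Polynomial.X

/-- `s_i = 1 - (1-x)^{ζ^i}` truncated mod `X^p`. -/
noncomputable def sElt (p : ℕ) [Fact p.Prime] (ζ : ℤ_[p]) (i : ℕ) : TruncV p :=
  1 - ∑ m ∈ Finset.range p, pbinom p ((ζ : ℚ_[p]) ^ i) m • (-xV p) ^ m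

/-!
The element `s_i` is obtained by substituting `Y = ζ ^ i` into the bivariate polynomial
`B(X, Y) = 1 - ∑_{m < p} C(Y, m) (-X) ^ m`. Every coefficient of `X ^ a` in `B` is a polynomial
in `Y` of degree at most `a` without constant term, and both properties pass to `B ^ n` for
`n ≥ 1`. Summing a polynomial of degree `< p - 1` over the `(p-1)`-st roots of unity `ζ ^ i`
kills every monomial `Y ^ k` with `0 < k < p - 1`, so the coefficients of `x ^ a`, `a < p - 1`,
of `∑ s_i ^ n` are `(p - 1)` times a vanishing constant term.
-/

namespace IsPrimitiveRoot

variable {R : Type*} [CommRing R] [IsDomain R] {ω : R} {N : ℕ}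

theorem sum_pow_pow_eq_zero (hω : IsPrimitiveRoot ω N) {k : ℕ} (hk0 : k ≠ 0) (hkN : k < N) :
    ∑ i ∈ Finset.range N, (ω ^ i) ^ k = 0 := by
  have hne : ω ^ k - 1 ≠ 0 := sub_ne_zero.mpr (hω.pow_ne_one_of_pos_of_lt hk0 hkN)
  have hgeom := mul_geom_sum (ω ^ k) N
  rw [pow_right_comm, hω.pow_eq_one, one_pow, sub_self] at hgeom
  simpa only [pow_right_comm ω _ k] using (mul_eq_zero.mp hgeom).resolve_left hne

theorem sum_eval_pow (hω : IsPrimitiveRoot ω N) {g : R[X]} (hg : g.natDegree < N) :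
    ∑ i ∈ Finset.range N, g.eval (ω ^ i) = N * g.coeff 0 := by
  simp_rw [eval_eq_sum_range' hg]
  rw [Finset.sum_comm, Finset.sum_eq_single 0]
  · simp [mul_comm]
  · intro k hk hk0
    rw [← Finset.mul_sum, hω.sum_pow_pow_eq_zero hk0 (Finset.mem_range.mp hk), mul_zero]
  · intro h
    exact absurd (Finset.mem_range.mpr (by omega)) h

end IsPrimitiveRoot

namespace Polynomial

section CommRing

variable (R : Type*) [CommRing R]

/-- Writing `Y` for the inner variable `C X`, this is the subring of `R[Y][X]` spanned by the
monomials `X ^ a * Y ^ b` with `b ≤ a`, i.e. the subring generated by `R`, `X` and `X * Y`. -/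
def coeffNatDegreeLESubring : Subring R[X][X] where
  carrier := {f | ∀ a, (f.coeff a).natDegree ≤ a}
  mul_mem' {f g} hf hg a := by
    rw [coeff_mul]
    refine natDegree_sum_le_of_forall_le _ _ fun ij hij => ?_
    rw [← Finset.HasAntidiagonal.mem_antidiagonal.mp hij]
    exact natDegree_mul_le.trans (add_le_add (hf ij.1) (hg ij.2))
  one_mem' a := by
    rw [coeff_one]
    split_ifs <;> simp
  add_mem' {f g} hf hg a := by
    rw [coeff_add]
    exact natDegree_add_le_of_degree_le (hf a) (hg a)
  zero_mem' a := by simp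
  neg_mem' {f} hf a := by
    rw [coeff_neg, natDegree_neg]
    exact hf a

variable {R}

theorem C_mul_X_pow_mem_coeffNatDegreeLESubring {q : R[X]} {m : ℕ} (hq : q.natDegree ≤ m) :
    C q * X ^ m ∈ coeffNatDegreeLESubring R := by
  intro a
  rw [coeff_C_mul_X_pow]
  split_ifs with h
  · exact h ▸ hq
  · simp

theorem mk_eq_coeff_smul_X_pow {M N : ℕ} {F : R[X]} (hF : ∀ a < M, a ≠ N → F.coeff a = 0) :
    Ideal.Quotient.mk (Ideal.span {X ^ M}) F
      = F.coeff N • Ideal.Quotient.mk (Ideal.span {X ^ M}) (X ^ N) := by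
  rw [← Ideal.Quotient.mkₐ_eq_mk R, ← map_smul, Ideal.Quotient.mkₐ_eq_mk, Ideal.Quotient.eq,
    Ideal.mem_span_singleton, X_pow_dvd_iff]
  intro a ha
  rw [coeff_sub, smul_eq_C_mul, coeff_C_mul_X_pow]
  by_cases haN : a = N
  · rw [if_pos haN, haN, sub_self]
  · rw [if_neg haN, hF a ha haN, sub_zero]

theorem coeff_sum_map_evalRingHom_pow_eq_zero [IsDomain R] {ω : R} {N : ℕ}
    (hω : IsPrimitiveRoot ω N) {f : R[X][X]} (hf : f ∈ coeffNatDegreeLESubring R)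
    (hf0 : f.map (evalRingHom 0) = 0) {a : ℕ} (ha : a < N) :
    (∑ i ∈ Finset.range N, f.map (evalRingHom (ω ^ i))).coeff a = 0 := by
  have h0 : (f.coeff a).coeff 0 = 0 := by
    simpa [coeff_zero_eq_eval_zero] using congr_arg (coeff · a) hf0
  simp only [finsetSum_coeff, coeff_map, coe_evalRingHom]
  rw [hω.sum_eval_pow ((hf a).trans_lt ha), h0, mul_zero]

end CommRing

section Field

variable (K : Type*) [Field K]

/-- `1 - (1 - X) ^ Y` truncated mod `X ^ N`, with `Y = C X`. -/
noncomputable def binomSeries (N : ℕ) : K[X][X] :=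
  1 - ∑ m ∈ Finset.range N, C (descPochhammer K m * C (m.factorial : K)⁻¹) * (-X) ^ m

theorem binomSeries_mem_coeffNatDegreeLESubring (N : ℕ) :
    binomSeries K N ∈ coeffNatDegreeLESubring K := by
  refine sub_mem (one_mem _) (sum_mem fun m _ => ?_)
  rw [neg_pow (X : K[X][X]), mul_left_comm]
  refine mul_mem (pow_mem (neg_mem (one_mem _)) m) (C_mul_X_pow_mem_coeffNatDegreeLESubring ?_)
  exact natDegree_mul_le.trans (by simp [descPochhammer_natDegree])

variable {K}

theorem binomSeries_map_evalRingHom_zero {N : ℕ} (hN : N ≠ 0) :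
    (binomSeries K N).map (evalRingHom 0) = 0 := by
  simp [binomSeries, Polynomial.map_sum, descPochhammer_eval_zero, Nat.pos_of_ne_zero hN]

theorem binomSeries_map_evalRingHom (N : ℕ) (y : K) :
    (binomSeries K N).map (evalRingHom y)
      = 1 - ∑ m ∈ Finset.range N, ((descPochhammer K m).eval y / m.factorial) • (-X) ^ m := by
  simp [binomSeries, Polynomial.map_sum, smul_eq_C_mul, div_eq_mul_inv]

end Field

end Polynomial

theorem sElt_eq_mk_map (p : ℕ) [Fact p.Prime] (ζ : ℤ_[p]) (i : ℕ) :
    sElt p ζ i =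
      Ideal.Quotient.mk _ ((binomSeries ℚ_[p] p).map (evalRingHom ((ζ : ℚ_[p]) ^ i))) := by
  rw [binomSeries_map_evalRingHom, ← Ideal.Quotient.mkₐ_eq_mk ℚ_[p]]
  simp only [sElt, pbinom, xV, map_sub, map_one, map_sum, map_smul, map_pow, map_neg,
    Ideal.Quotient.mkₐ_eq_mk]

theorem sum_pow_multiple_of_top_general (p : ℕ) [Fact p.Prime] (ζ : ℤ_[p])
    (hord : orderOf ζ = p - 1)
    (n : ℕ) (hn : 1 ≤ n) :
    ∃ c : ℚ_[p],
      ∑ i ∈ Finset.range (p - 1), (sElt p ζ i) ^ n = c • xV p ^ (p - 1) := by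
  have hω : IsPrimitiveRoot (ζ : ℚ_[p]) (p - 1) :=
    hord ▸ (IsPrimitiveRoot.orderOf ζ).map_of_injective (f := PadicInt.Coe.ringHom)
      Subtype.coe_injective
  set F := ∑ i ∈ Finset.range (p - 1),
    ((binomSeries ℚ_[p] p) ^ n).map (evalRingHom ((ζ : ℚ_[p]) ^ i))
  have hsum : ∑ i ∈ Finset.range (p - 1), (sElt p ζ i) ^ n = Ideal.Quotient.mk _ F := by
    simp only [F, sElt_eq_mk_map, map_sum, map_pow, Polynomial.map_pow]
  have hF : ∀ a < p - 1, F.coeff a = 0 := fun a ha =>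
    coeff_sum_map_evalRingHom_pow_eq_zero hω
      (pow_mem (binomSeries_mem_coeffNatDegreeLESubring ℚ_[p] p) n)
      (by rw [Polynomial.map_pow, binomSeries_map_evalRingHom_zero (Fact.out : p.Prime).ne_zero,
        zero_pow (by omega)]) ha
  refine ⟨F.coeff (p - 1), ?_⟩
  rw [hsum, xV, ← map_pow]
  exact mk_eq_coeff_smul_X_pow fun a ha hap => hF a (by omega)

/-- For every `n ≥ 1`, the sum `Σ_{i=0}^{p-2} s_i^n` is a scalar multiple of `x^{p-1}`:
its coefficients in degrees `0 ≤ a ≤ p-2` all vanish. -/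
theorem sum_pow_multiple_of_top (p : ℕ) [Fact p.Prime] (hp : Odd p) (ζ : ℤ_[p])
    (hζ : ζ ^ (p - 1) = 1) (hord : orderOf ζ = p - 1)
    (n : ℕ) (hn : 1 ≤ n) :
    ∃ c : ℚ_[p],
      ∑ i ∈ Finset.range (p - 1), (sElt p ζ i) ^ n = c • xV p ^ (p - 1) :=
  sum_pow_multiple_of_top_general p ζ hord n hn
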